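/- Let T be a finite AND/OR tree and let the cost functions p, d be computed with Ψ = sum, all edge costs 0, and h = h̄ ≡ 1 at non-terminal leaves (this is the proof-number/disproof-number scheme). Then for every node x: p(x) equals the minimum, over all solution bases rooted at x (subtrees containing exactly one child of each of their internal OR nodes and all children of each of their internal AND nodes) that contain no unsolvable terminal leaf, of the number of non-terminal leaves of the base, where the minimum over the empty collection is ∞. Dually, d(x) equals the minimum, over all disproof bases rooted at x (all children at OR nodes, exactly one child at AND nodes) that contain no solvable terminal leaf, of the number of non-terminal leaves of the base. In particular, p(x) and d(x) are the minimum numbers of non-terminal leaf nodes that must be examined in order to prove, respectively disprove, x. -/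

import Mathlib

/-!
Both sides obey the same well-founded recursion. A solution base rooted at an internal OR node
is the node together with a solution base rooted at one child, and one rooted at an internal AND
node is the node together with solution bases rooted at all children; these are pairwise
disjoint, since each base consists of descendants of its root. So the minimal number of
non-terminal leaves satisfies the min/sum recursion defining the proof number, whose solution is
unique. Exchanging OR with AND and solvable with unsolvable terminals turns disproof bases and
disproof numbers into solution bases and proof numbers.
-/

/-- A node of an AND/OR tree is labeled either OR or AND. -/
inductive NodeKind : Type
  | orN
  | andN
deriving DecidableEq

/-- A leaf is a solvable terminal, an unsolvable terminal, or a non-terminal leaf. -/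
inductive LeafKind : Type
  | solv
  | unsolv
  | nonterm
deriving DecidableEq

/-- A finite AND/OR tree on a node type `V`, presented by a successor function
(`succ n = ∅` means `n` is a leaf) with a well-founded successor relation and
at most one parent per node. -/
structure AOTree (V : Type) where
  succ : V → Finset V
  kind : V → NodeKind
  leafKind : V → LeafKind
  acyclic : WellFounded (fun a b : V => a ∈ succ b)
  oneParent : ∀ x n n' : V, x ∈ succ n → x ∈ succ n' → n = n'

/-- `pn` is the proof-number function: `0` on solvable terminals, `∞` on
unsolvable terminals, `1` on non-terminal leaves, the minimum of the
children's values at internal OR nodes and their sum at internal AND nodes. -/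
def IsProofNumber {V : Type} (T : AOTree V) (pn : V → ℕ∞) : Prop :=
  ∀ n : V,
    (T.succ n = ∅ →
      pn n = (match T.leafKind n with
              | .solv => 0
              | .unsolv => ⊤
              | .nonterm => 1)) ∧
    (T.succ n ≠ ∅ →
      pn n = (match T.kind n with
              | .orN => (T.succ n).inf pn
              | .andN => ∑ x ∈ T.succ n, pn x))

/-- `dn` is the disproof-number function: `∞` on solvable terminals, `0` on
unsolvable terminals, `1` on non-terminal leaves, the sum of the children's
values at internal OR nodes and their minimum at internal AND nodes. -/
def IsDisproofNumber {V : Type} (T : AOTree V) (dn : V → ℕ∞) : Prop :=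
  ∀ n : V,
    (T.succ n = ∅ →
      dn n = (match T.leafKind n with
              | .solv => ⊤
              | .unsolv => 0
              | .nonterm => 1)) ∧
    (T.succ n ≠ ∅ →
      dn n = (match T.kind n with
              | .orN => ∑ x ∈ T.succ n, dn x
              | .andN => (T.succ n).inf dn))

/-- `B` is (the node set of) a solution base rooted at `x`: a subtree
containing `x` (every other element has a parent in `B`), exactly one child of
each of its internal OR nodes, and all children of each of its internal AND
nodes. -/
def IsSolutionBase {V : Type} (T : AOTree V) (x : V) (B : Finset V) : Prop :=
  x ∈ B ∧
  (∀ y ∈ B, y ≠ x → ∃ z ∈ B, y ∈ T.succ z) ∧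
  (∀ y ∈ B, T.succ y ≠ ∅ → T.kind y = .orN → ∃! z : V, z ∈ T.succ y ∧ z ∈ B) ∧
  (∀ y ∈ B, T.succ y ≠ ∅ → T.kind y = .andN → ∀ z ∈ T.succ y, z ∈ B)

/-- `B` is (the node set of) a disproof base rooted at `x`: all children at OR
nodes, exactly one child at AND nodes. -/
def IsDisproofBase {V : Type} (T : AOTree V) (x : V) (B : Finset V) : Prop :=
  x ∈ B ∧
  (∀ y ∈ B, y ≠ x → ∃ z ∈ B, y ∈ T.succ z) ∧
  (∀ y ∈ B, T.succ y ≠ ∅ → T.kind y = .orN → ∀ z ∈ T.succ y, z ∈ B) ∧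
  (∀ y ∈ B, T.succ y ≠ ∅ → T.kind y = .andN → ∃! z : V, z ∈ T.succ y ∧ z ∈ B)

/-- The number of non-terminal leaves contained in `B`. -/
def nontermLeafCount {V : Type} [DecidableEq V] (T : AOTree V) (B : Finset V) : ℕ :=
  (B.filter (fun y => T.succ y = ∅ ∧ T.leafKind y = .nonterm)).card

open Relation

theorem sInf_eq_finset_inf_sInf {α ι : Type*} [CompleteLattice α] {S : Set α} {s : Finset ι}
    {F : ι → Set α} (hle : ∀ k ∈ S, ∃ i ∈ s, ∃ k' ∈ F i, k' ≤ k)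
    (hsub : ∀ i ∈ s, F i ⊆ S) :
    sInf S = s.inf fun i => sInf (F i) := by
  refine le_antisymm (Finset.le_inf fun i hi => sInf_le_sInf (hsub i hi)) (le_sInf ?_)
  intro k hk
  obtain ⟨i, hi, k', hk', hk'k⟩ := hle k hk
  exact (Finset.inf_le hi).trans ((sInf_le hk').trans hk'k)

theorem ENat.sInf_eq_sum_sInf {ι : Type*} {S : Set ℕ∞} {s : Finset ι} {F : ι → Set ℕ∞}
    (hle : ∀ k ∈ S, ∃ f : ι → ℕ∞, (∀ i ∈ s, f i ∈ F i) ∧ ∑ i ∈ s, f i ≤ k)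
    (hmem : ∀ f : ι → ℕ∞, (∀ i ∈ s, f i ∈ F i) → ∑ i ∈ s, f i ∈ S) :
    sInf S = ∑ i ∈ s, sInf (F i) := by
  refine le_antisymm ?_ (le_sInf fun k hk => ?_)
  · by_cases hne : ∀ i ∈ s, (F i).Nonempty
    · exact sInf_le (hmem _ fun i hi => csInf_mem (hne i hi))
    · push Not at hne
      obtain ⟨i, hi, hFi⟩ := hne
      have : ∑ i ∈ s, sInf (F i) = ⊤ :=
        ENat.sum_eq_top.mpr ⟨i, hi, by rw [hFi, sInf_empty]⟩
      exact this ▸ le_top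
  · obtain ⟨f, hf, hfk⟩ := hle k hk
    exact (Finset.sum_le_sum fun i hi => sInf_le (hf i hi)).trans hfk

namespace AOTree

variable {V : Type} (T : AOTree V)

abbrev Child (a b : V) : Prop := a ∈ T.succ b

variable {T}

theorem not_reflTransGen_of_mem_succ {x c : V} (hc : c ∈ T.succ x) :
    ¬ ReflTransGen T.Child x c := fun h =>
  T.acyclic.transGen.irrefl.irrefl x (TransGen.tail' h hc)

theorem ne_of_mem_succ {x c : V} (hc : c ∈ T.succ x) : c ≠ x := by
  rintro rfl
  exact not_reflTransGen_of_mem_succ hc ReflTransGen.refl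

theorem reflTransGen_total_of_reflTransGen {z a b : V} (ha : ReflTransGen T.Child z a)
    (hb : ReflTransGen T.Child z b) : ReflTransGen T.Child a b ∨ ReflTransGen T.Child b a := by
  induction ha using ReflTransGen.head_induction_on with
  | refl => exact Or.inl hb
  | head hzp hpa ih =>
    rcases ReflTransGen.cases_head hb with rfl | ⟨q, hzq, hqb⟩
    · exact Or.inr (ReflTransGen.head hzp hpa)
    · exact ih (T.oneParent _ _ _ hzp hzq ▸ hqb)

theorem eq_of_reflTransGen_of_mem_succ {x c c' : V} (hc : c ∈ T.succ x) (hc' : c' ∈ T.succ x)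
    (h : ReflTransGen T.Child c c') : c = c' := by
  rcases ReflTransGen.cases_head h with h | ⟨m, hcm, hmc'⟩
  · exact h
  · cases T.oneParent c m x hcm hc
    exact absurd hmc' (not_reflTransGen_of_mem_succ hc')

theorem eq_of_reflTransGen_of_reflTransGen {x c c' z : V} (hc : c ∈ T.succ x)
    (hc' : c' ∈ T.succ x) (h : ReflTransGen T.Child z c) (h' : ReflTransGen T.Child z c') :
    c = c' :=
  (reflTransGen_total_of_reflTransGen h h').elim (eq_of_reflTransGen_of_mem_succ hc hc')
    fun h => (eq_of_reflTransGen_of_mem_succ hc' hc h).symm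

end AOTree

section Bases

variable {V : Type} {T : AOTree V}

open AOTree Finset

def IsSolutionBranching (T : AOTree V) (B : Finset V) (y : V) : Prop :=
  (T.succ y ≠ ∅ → T.kind y = .orN → ∃! z : V, z ∈ T.succ y ∧ z ∈ B) ∧
  (T.succ y ≠ ∅ → T.kind y = .andN → ∀ z ∈ T.succ y, z ∈ B)

theorem isSolutionBase_iff {x : V} {B : Finset V} :
    IsSolutionBase T x B ↔ x ∈ B ∧ (∀ y ∈ B, y ≠ x → ∃ z ∈ B, y ∈ T.succ z) ∧
      ∀ y ∈ B, IsSolutionBranching T B y := by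
  simp only [IsSolutionBase, IsSolutionBranching, forall_and]

theorem isSolutionBranching_congr {y : V} {B B' : Finset V}
    (h : ∀ z ∈ T.succ y, z ∈ B ↔ z ∈ B') :
    IsSolutionBranching T B y ↔ IsSolutionBranching T B' y := by
  unfold IsSolutionBranching
  refine and_congr (imp_congr_right fun _ => imp_congr_right fun _ => ?_)
    (imp_congr_right fun _ => imp_congr_right fun _ => forall₂_congr h)
  exact existsUnique_congr fun z => ⟨fun hz => ⟨hz.1, (h z hz.1).1 hz.2⟩,
    fun hz => ⟨hz.1, (h z hz.1).2 hz.2⟩⟩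

/-- Bases are finite, so following parents inside `B` must end at the root. -/
theorem IsSolutionBase.reflTransGen {x y : V} {B : Finset V} (hB : IsSolutionBase T x B)
    (hy : y ∈ B) : ReflTransGen T.Child y x := by
  let _ : IsStrictOrder V (flip (TransGen T.Child)) :=
    { irrefl := fun a => T.acyclic.transGen.irrefl.irrefl a
      trans := fun _ _ _ h₁ h₂ => h₂.trans h₁ }
  refine (B.finite_toSet.wellFoundedOn (r := flip (TransGen T.Child))).induction
    (P := (ReflTransGen T.Child · x)) hy fun y hy ih => ?_
  by_cases hyx : y = x
  · exact hyx ▸ ReflTransGen.refl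
  · obtain ⟨z, hz, hyz⟩ := hB.2.1 y hy hyx
    exact ReflTransGen.head hyz (ih z hz (TransGen.single hyz))

theorem isSolutionBase_singleton {x : V} (hx : T.succ x = ∅) : IsSolutionBase T x {x} := by
  refine isSolutionBase_iff.2 ⟨mem_singleton_self x,
    fun y hy hyx => absurd (mem_singleton.1 hy) hyx, fun y hy => ?_⟩
  rw [mem_singleton.1 hy]
  exact ⟨fun h => absurd hx h, fun h => absurd hx h⟩

theorem IsSolutionBase.eq_singleton {x : V} {B : Finset V} (hB : IsSolutionBase T x B)
    (hx : T.succ x = ∅) : B = {x} := by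
  refine eq_singleton_iff_unique_mem.2 ⟨hB.1, fun y hy => ?_⟩
  rcases ReflTransGen.cases_tail (hB.reflTransGen hy) with h | ⟨p, -, hp⟩
  · exact h.symm
  · simp [Child, hx] at hp

theorem IsSolutionBase.exists_subset {x c : V} {B : Finset V} (hB : IsSolutionBase T x B)
    (hc : c ∈ T.succ x) (hcB : c ∈ B) : ∃ B' ⊆ B, IsSolutionBase T c B' := by
  classical
  refine ⟨B.filter (ReflTransGen T.Child · c), filter_subset _ _, ?_⟩
  obtain ⟨-, hpar, hbranch⟩ := isSolutionBase_iff.1 hB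
  refine isSolutionBase_iff.2 ⟨mem_filter.2 ⟨hcB, ReflTransGen.refl⟩, fun y hy hyc => ?_,
    fun y hy => ?_⟩
  · obtain ⟨hyB, hyc'⟩ := mem_filter.1 hy
    obtain ⟨p, hpB, hyp⟩ :=
      hpar y hyB (by rintro rfl; exact not_reflTransGen_of_mem_succ hc hyc')
    rcases ReflTransGen.cases_head hyc' with h | ⟨q, hyq, hqc⟩
    · exact absurd h hyc
    · exact ⟨p, mem_filter.2 ⟨hpB, T.oneParent y q p hyq hyp ▸ hqc⟩, hyp⟩
  · obtain ⟨hyB, hyc'⟩ := mem_filter.1 hy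
    refine (isSolutionBranching_congr fun z hz => ?_).1 (hbranch y hyB)
    simp [ReflTransGen.head hz hyc']

theorem isSolutionBase_insert_biUnion [DecidableEq V] {x : V} {s : Finset V}
    {g : V → Finset V} (hs : s ⊆ T.succ x) (hg : ∀ c ∈ s, IsSolutionBase T c (g c))
    (hx : IsSolutionBranching T s x) : IsSolutionBase T x (insert x (s.biUnion g)) := by
  have hdesc : ∀ c ∈ s, ∀ y ∈ g c, ReflTransGen T.Child y c :=
    fun c hc y hy => (hg c hc).reflTransGen hy
  have hroot : ∀ z ∈ T.succ x, z ∈ insert x (s.biUnion g) ↔ z ∈ s := by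
    intro z hz
    rw [mem_insert, mem_biUnion]
    refine ⟨?_, fun h => Or.inr ⟨z, h, (hg z h).1⟩⟩
    rintro (h | ⟨c, hc, hzc⟩)
    · exact absurd h (ne_of_mem_succ hz)
    · exact eq_of_reflTransGen_of_reflTransGen hz (hs hc) .refl (hdesc c hc z hzc) ▸ hc
  have hbelow : ∀ c ∈ s, ∀ y ∈ g c, ∀ z ∈ T.succ y,
      z ∈ insert x (s.biUnion g) ↔ z ∈ g c := by
    intro c hc y hy z hz
    rw [mem_insert, mem_biUnion]
    refine ⟨?_, fun h => Or.inr ⟨c, hc, h⟩⟩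
    rintro (rfl | ⟨c', hc', hzc'⟩)
    · exact absurd ((hdesc c hc y hy).tail (hs hc)) (not_reflTransGen_of_mem_succ hz)
    · exact eq_of_reflTransGen_of_reflTransGen (hs hc') (hs hc) (hdesc c' hc' z hzc')
        (ReflTransGen.head hz (hdesc c hc y hy)) ▸ hzc'
  refine isSolutionBase_iff.2 ⟨mem_insert_self _ _, fun y hy hyx => ?_, fun y hy => ?_⟩
  · obtain ⟨c, hc, hyc⟩ := mem_biUnion.1 ((mem_insert.1 hy).resolve_left hyx)
    by_cases hyc' : y = c
    · exact ⟨x, mem_insert_self _ _, hyc' ▸ hs hc⟩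
    · obtain ⟨p, hp, hyp⟩ := (hg c hc).2.1 y hyc hyc'
      exact ⟨p, mem_insert_of_mem (mem_biUnion.2 ⟨c, hc, hp⟩), hyp⟩
  · rcases mem_insert.1 hy with rfl | hy
    · exact (isSolutionBranching_congr hroot).2 hx
    · obtain ⟨c, hc, hyc⟩ := mem_biUnion.1 hy
      exact (isSolutionBranching_congr (hbelow c hc y hyc)).2
        ((isSolutionBase_iff.1 (hg c hc)).2.2 y hyc)

theorem pairwiseDisjoint_of_isSolutionBase {x : V} {s : Finset V} {g : V → Finset V}
    (hs : s ⊆ T.succ x) (hg : ∀ c ∈ s, IsSolutionBase T c (g c)) :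
    (s : Set V).PairwiseDisjoint g := fun c hc c' hc' hne =>
  disjoint_left.2 fun _ hy hy' => hne <| eq_of_reflTransGen_of_reflTransGen (hs hc) (hs hc')
    ((hg c hc).reflTransGen hy) ((hg c' hc').reflTransGen hy')

end Bases

section Costs

variable {V : Type} [DecidableEq V] {T : AOTree V}

open Finset

theorem nontermLeafCount_mono {B B' : Finset V} (h : B' ⊆ B) :
    nontermLeafCount T B' ≤ nontermLeafCount T B :=
  card_le_card (filter_subset_filter _ h)

theorem nontermLeafCount_insert_of_succ_ne_empty {x : V} (hx : T.succ x ≠ ∅) (B : Finset V) :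
    nontermLeafCount T (insert x B) = nontermLeafCount T B := by
  rw [nontermLeafCount, filter_insert, if_neg (by simp [hx]), nontermLeafCount]

theorem nontermLeafCount_biUnion {ι : Type*} {s : Finset ι} {g : ι → Finset V}
    (h : (s : Set ι).PairwiseDisjoint g) :
    nontermLeafCount T (s.biUnion g) = ∑ i ∈ s, nontermLeafCount T (g i) := by
  rw [nontermLeafCount, filter_biUnion, card_biUnion fun i hi j hj hij =>
    disjoint_filter_filter (h hi hj hij)]
  rfl

variable (T) in
def AOTree.solutionCosts (x : V) : Set ℕ∞ :=
  {k | ∃ B : Finset V, IsSolutionBase T x B ∧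
    (∀ y ∈ B, T.succ y = ∅ → T.leafKind y ≠ .unsolv) ∧
    k = (nontermLeafCount T B : ℕ∞)}

theorem sInf_solutionCosts_of_succ_eq_empty {x : V} (hx : T.succ x = ∅) :
    sInf (T.solutionCosts x) =
      (match T.leafKind x with | .solv => 0 | .unsolv => ⊤ | .nonterm => 1) := by
  have : T.solutionCosts x =
      {k | T.leafKind x ≠ .unsolv ∧ k = (nontermLeafCount T {x} : ℕ∞)} := by
    ext k
    constructor
    · rintro ⟨B, hB, hadm, rfl⟩
      rw [hB.eq_singleton hx] at hadm ⊢
      exact ⟨hadm x (mem_singleton_self x) hx, rfl⟩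
    · rintro ⟨h, rfl⟩
      exact ⟨{x}, isSolutionBase_singleton hx, by simpa using fun _ => h, rfl⟩
  rw [this]
  cases h : T.leafKind x <;> simp [nontermLeafCount, filter_singleton, hx, h]

theorem sInf_solutionCosts_of_orN {x : V} (hx : T.succ x ≠ ∅) (hk : T.kind x = .orN) :
    sInf (T.solutionCosts x) = (T.succ x).inf fun c => sInf (T.solutionCosts c) := by
  refine sInf_eq_finset_inf_sInf ?_ fun c hc => ?_
  · rintro _ ⟨B, hB, hadm, rfl⟩
    obtain ⟨c, ⟨hc, hcB⟩, -⟩ := hB.2.2.1 x hB.1 hx hk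
    obtain ⟨B', hB'B, hB'⟩ := hB.exists_subset hc hcB
    exact ⟨c, hc, _, ⟨B', hB', fun y hy => hadm y (hB'B hy), rfl⟩,
      by exact_mod_cast nontermLeafCount_mono hB'B⟩
  · rintro _ ⟨B, hB, hadm, rfl⟩
    have hbranch : IsSolutionBranching T {c} x :=
      ⟨fun _ _ => ⟨c, ⟨hc, mem_singleton_self c⟩, fun _ hz => mem_singleton.1 hz.2⟩,
        fun _ h => absurd (hk.symm.trans h) (by decide)⟩
    have hB' := isSolutionBase_insert_biUnion (singleton_subset_iff.2 hc)
      (fun c' hc' => mem_singleton.1 hc' ▸ hB) hbranch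
    rw [singleton_biUnion] at hB'
    refine ⟨insert x B, hB', fun y hy hy' => ?_,
      by rw [nontermLeafCount_insert_of_succ_ne_empty hx]⟩
    rcases mem_insert.1 hy with rfl | hy
    · exact absurd hy' hx
    · exact hadm y hy hy'

theorem sInf_solutionCosts_of_andN {x : V} (hx : T.succ x ≠ ∅) (hk : T.kind x = .andN) :
    sInf (T.solutionCosts x) = ∑ c ∈ T.succ x, sInf (T.solutionCosts c) := by
  refine ENat.sInf_eq_sum_sInf ?_ fun f hf => ?_
  · rintro _ ⟨B, hB, hadm, rfl⟩
    have hsub : ∀ c, ∃ B' ⊆ B, c ∈ T.succ x → IsSolutionBase T c B' := fun c =>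
      if hc : c ∈ T.succ x then (hB.exists_subset hc (hB.2.2.2 x hB.1 hx hk c hc)).imp
        fun _ h => ⟨h.1, fun _ => h.2⟩
      else ⟨∅, empty_subset B, fun h => absurd h hc⟩
    choose g hgB hg using hsub
    refine ⟨fun c => nontermLeafCount T (g c),
      fun c hc => ⟨g c, hg c hc, fun y hy => hadm y (hgB c hy), rfl⟩, ?_⟩
    rw [← Nat.cast_sum, ← nontermLeafCount_biUnion (pairwiseDisjoint_of_isSolutionBase
      subset_rfl hg)]
    exact_mod_cast nontermLeafCount_mono (biUnion_subset.2 fun c _ => hgB c)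
  · have hbase : ∀ c, ∃ B, c ∈ T.succ x → IsSolutionBase T c B ∧
        (∀ y ∈ B, T.succ y = ∅ → T.leafKind y ≠ .unsolv) ∧ f c = nontermLeafCount T B :=
      fun c => if hc : c ∈ T.succ x then (hf c hc).imp fun _ h _ => h
        else ⟨∅, fun h => absurd h hc⟩
    choose g hg using hbase
    have hbranch : IsSolutionBranching T (T.succ x) x :=
      ⟨fun _ h => absurd (hk.symm.trans h) (by decide), fun _ _ z hz => hz⟩
    refine ⟨insert x ((T.succ x).biUnion g),
      isSolutionBase_insert_biUnion subset_rfl (fun c hc => (hg c hc).1) hbranch,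
      fun y hy hy' => ?_, ?_⟩
    · rcases mem_insert.1 hy with rfl | hy
      · exact absurd hy' hx
      · obtain ⟨c, hc, hyc⟩ := mem_biUnion.1 hy
        exact (hg c hc).2.1 y hyc hy'
    · rw [nontermLeafCount_insert_of_succ_ne_empty hx, nontermLeafCount_biUnion
        (pairwiseDisjoint_of_isSolutionBase subset_rfl fun c hc => (hg c hc).1), Nat.cast_sum]
      exact sum_congr rfl fun c hc => (hg c hc).2.2

theorem isProofNumber_sInf_solutionCosts : IsProofNumber T fun x => sInf (T.solutionCosts x) :=
  fun x => ⟨sInf_solutionCosts_of_succ_eq_empty, fun hx => by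
    cases hk : T.kind x
    · exact sInf_solutionCosts_of_orN hx hk
    · exact sInf_solutionCosts_of_andN hx hk⟩

end Costs

theorem IsProofNumber.eq {V : Type} {T : AOTree V} {f g : V → ℕ∞} (hf : IsProofNumber T f)
    (hg : IsProofNumber T g) : f = g := by
  funext x
  induction x using T.acyclic.induction with
  | _ x ih =>
    by_cases hx : T.succ x = ∅
    · rw [(hf x).1 hx, (hg x).1 hx]
    · rw [(hf x).2 hx, (hg x).2 hx]
      cases T.kind x
      · exact Finset.inf_congr rfl ih
      · exact Finset.sum_congr rfl ih

def NodeKind.swap : NodeKind → NodeKind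
  | .orN => .andN
  | .andN => .orN

def LeafKind.swap : LeafKind → LeafKind
  | .solv => .unsolv
  | .unsolv => .solv
  | .nonterm => .nonterm

@[simp] theorem NodeKind.swap_eq_orN {k : NodeKind} : k.swap = .orN ↔ k = .andN := by
  cases k <;> decide

@[simp] theorem NodeKind.swap_eq_andN {k : NodeKind} : k.swap = .andN ↔ k = .orN := by
  cases k <;> decide

@[simp] theorem LeafKind.swap_eq_unsolv {k : LeafKind} : k.swap = .unsolv ↔ k = .solv := by
  cases k <;> decide

@[simp] theorem LeafKind.swap_eq_nonterm {k : LeafKind} : k.swap = .nonterm ↔ k = .nonterm := by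
  cases k <;> decide

namespace AOTree

variable {V : Type} (T : AOTree V)

def dual : AOTree V :=
  { T with kind := fun v => (T.kind v).swap, leafKind := fun v => (T.leafKind v).swap }

variable {T}

theorem isProofNumber_dual {dn : V → ℕ∞} (h : IsDisproofNumber T dn) :
    IsProofNumber T.dual dn := fun n =>
  ⟨fun hn => by rw [(h n).1 hn]; dsimp only [dual]; cases T.leafKind n <;> rfl,
    fun hn => by rw [(h n).2 hn]; dsimp only [dual]; cases T.kind n <;> rfl⟩

theorem isSolutionBase_dual {x : V} {B : Finset V} :
    IsSolutionBase T.dual x B ↔ IsDisproofBase T x B := by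
  simp only [IsSolutionBase, IsDisproofBase, dual, NodeKind.swap_eq_orN, NodeKind.swap_eq_andN]
  tauto

theorem nontermLeafCount_dual [DecidableEq V] (B : Finset V) :
    nontermLeafCount T.dual B = nontermLeafCount T B := by
  simp only [nontermLeafCount, dual, LeafKind.swap_eq_nonterm]

theorem solutionCosts_dual [DecidableEq V] (x : V) :
    T.dual.solutionCosts x = {k | ∃ B : Finset V, IsDisproofBase T x B ∧
      (∀ y ∈ B, T.succ y = ∅ → T.leafKind y ≠ .solv) ∧
      k = (nontermLeafCount T B : ℕ∞)} := by
  simp only [solutionCosts, isSolutionBase_dual, nontermLeafCount_dual]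
  simp only [dual, ne_eq, LeafKind.swap_eq_unsolv]

end AOTree

theorem proof_number_eq_min_nonterminal_leaves_general {V : Type} [DecidableEq V]
    (T : AOTree V) (pn dn : V → ℕ∞)
    (hpn : IsProofNumber T pn) (hdn : IsDisproofNumber T dn) :
    ∀ x : V,
      pn x = sInf {k : ℕ∞ | ∃ B : Finset V, IsSolutionBase T x B ∧
        (∀ y ∈ B, T.succ y = ∅ → T.leafKind y ≠ .unsolv) ∧
        k = (nontermLeafCount T B : ℕ∞)} ∧
      dn x = sInf {k : ℕ∞ | ∃ B : Finset V, IsDisproofBase T x B ∧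
        (∀ y ∈ B, T.succ y = ∅ → T.leafKind y ≠ .solv) ∧
        k = (nontermLeafCount T B : ℕ∞)} := by
  intro x
  rw [← T.solutionCosts_dual]
  exact ⟨congrFun (hpn.eq isProofNumber_sInf_solutionCosts) x,
    congrFun ((AOTree.isProofNumber_dual hdn).eq isProofNumber_sInf_solutionCosts) x⟩

/-- For every node `x` of a finite AND/OR tree: `pn x` equals
the minimum, over all solution bases rooted at `x` containing no unsolvable
terminal leaf, of the number of non-terminal leaves of the base (the minimum
over the empty collection being `∞`); dually, `dn x` equals the minimum, over
all disproof bases rooted at `x` containing no solvable terminal leaf, of the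
number of non-terminal leaves of the base. -/
theorem proof_number_eq_min_nonterminal_leaves {V : Type} [Fintype V] [DecidableEq V]
    (T : AOTree V) (pn dn : V → ℕ∞)
    (hpn : IsProofNumber T pn) (hdn : IsDisproofNumber T dn) :
    ∀ x : V,
      pn x = sInf {k : ℕ∞ | ∃ B : Finset V, IsSolutionBase T x B ∧
        (∀ y ∈ B, T.succ y = ∅ → T.leafKind y ≠ .unsolv) ∧
        k = (nontermLeafCount T B : ℕ∞)} ∧
      dn x = sInf {k : ℕ∞ | ∃ B : Finset V, IsDisproofBase T x B ∧
        (∀ y ∈ B, T.succ y = ∅ → T.leafKind y ≠ .solv) ∧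
        k = (nontermLeafCount T B : ℕ∞)} :=
  proof_number_eq_min_nonterminal_leaves_general T pn dn hpn hdn
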